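/- arXiv:1902.02983 — 2 statements merged into one kernel-verified Lean document; each statement's English description precedes it below -/
import Mathlib

section
/- Let (T, μ), (S, ν) be σ-finite measure spaces, 1 ≤ q ≤ p < ∞, ψ : S → T measurable with ν ∘ ψ⁻¹ ≪ μ and J = d(ν∘ψ⁻¹)/dμ, and let P : S → ℝ be a measurable weight with 0 < c ≤ |P(s)| ≤ C < ∞ for a.e. s. Then the weighted composition operator f ↦ P·(f ∘ ψ) is bounded from L^p(T, μ) to L^q(S, ν) if and only if J^{1/q} ∈ L^κ(T, μ), where κ = pq/(p−q) for p > q and κ = ∞ for p = q. -/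
/-!
Since `c ≤ |P| ≤ C` a.e., the weight changes the `L^q(ν)` norm of `f ∘ ψ` only up to constants.
Pushing `ν` forward along `ψ` turns `‖f ∘ ψ‖_{L^q(ν)}` into `‖f‖_{L^q(J μ)}`, so the question is
when `L^p(μ)` embeds continuously in `L^q(J μ)`. With `h = |f|^q` this asks that `h ↦ ∫ J h` be
bounded on `L^{p/q}(μ)`, i.e. that `J` lie in the dual space: `L^∞` if `p = q`, and `L^r` with
`r = p / (p - q)` (so `J^r = (J^{1/q})^κ`) otherwise. Sufficiency is Hölder's inequality. For
necessity, test with indicators of sets of finite measure when `p = q`; when `q < p`, test with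
`g^{r-1}` for truncations `g ≤ J` that are bounded and supported on a set of finite measure, and
let the truncations increase to `J` using Fatou's lemma.
-/

open MeasureTheory ENNReal

/-- Membership `g ∈ L^κ(T,μ)` for an `ℝ≥0∞`-valued `g`, with `κ = pq/(p-q)` for `p > q`
and `κ = ∞` for `p = q`. -/
noncomputable def memLkappa {T : Type*} [MeasurableSpace T] (μ : Measure T)
    (p q : ℝ) (g : T → ℝ≥0∞) : Prop :=
  if p = q then essSup g μ ≠ ⊤
  else ∫⁻ t, g t ^ (p * q / (p - q)) ∂μ ≠ ⊤

open Filter Topology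

section Weight

variable {S T : Type*} [MeasurableSpace S] {ν : Measure S}

theorem eLpNorm_mul_le_of_ae_abs_le {P u : S → ℝ} {C : ℝ} (hP : ∀ᵐ s ∂ν, |P s| ≤ C)
    (r : ℝ≥0∞) : eLpNorm (fun s => P s * u s) r ν ≤ ENNReal.ofReal C * eLpNorm u r ν :=
  eLpNorm_le_mul_eLpNorm_of_ae_le_mul (hP.mono fun s hs => by
    rw [norm_mul, Real.norm_eq_abs]
    exact mul_le_mul_of_nonneg_right hs (norm_nonneg _)) r

theorem eLpNorm_le_of_ae_le_abs {P u : S → ℝ} {c : ℝ} (hc : 0 < c) (hP : ∀ᵐ s ∂ν, c ≤ |P s|)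
    (r : ℝ≥0∞) : eLpNorm u r ν ≤ ENNReal.ofReal c⁻¹ * eLpNorm (fun s => P s * u s) r ν :=
  eLpNorm_le_mul_eLpNorm_of_ae_le_mul (hP.mono fun s hs => by
    rw [norm_mul, Real.norm_eq_abs, Real.norm_eq_abs, le_inv_mul_iff₀ hc]
    exact mul_le_mul_of_nonneg_right hs (abs_nonneg _)) r

theorem exists_eLpNorm_mul_comp_le_iff [MeasurableSpace T] {P : S → ℝ} {c C : ℝ} (hc : 0 < c)
    (hP : ∀ᵐ s ∂ν, c ≤ |P s| ∧ |P s| ≤ C) (ψ : S → T) (r : ℝ≥0∞) (N : (T → ℝ) → ℝ≥0∞) :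
    (∃ K : ℝ≥0∞, K ≠ ⊤ ∧ ∀ f : T → ℝ, Measurable f →
        eLpNorm (fun s => P s * f (ψ s)) r ν ≤ K * N f) ↔
      ∃ K : ℝ≥0∞, K ≠ ⊤ ∧ ∀ f : T → ℝ, Measurable f →
        eLpNorm (fun s => f (ψ s)) r ν ≤ K * N f := by
  constructor
  · rintro ⟨K, hK, hbound⟩
    refine ⟨ENNReal.ofReal c⁻¹ * K, mul_ne_top ofReal_ne_top hK, fun f hf => ?_⟩
    calc eLpNorm (fun s => f (ψ s)) r ν
        ≤ ENNReal.ofReal c⁻¹ * eLpNorm (fun s => P s * f (ψ s)) r ν :=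
          eLpNorm_le_of_ae_le_abs hc (hP.mono fun _ hs => hs.1) r
      _ ≤ ENNReal.ofReal c⁻¹ * K * N f := by
          rw [mul_assoc]
          gcongr
          exact hbound f hf
  · rintro ⟨K, hK, hbound⟩
    refine ⟨ENNReal.ofReal C * K, mul_ne_top ofReal_ne_top hK, fun f hf => ?_⟩
    calc eLpNorm (fun s => P s * f (ψ s)) r ν
        ≤ ENNReal.ofReal C * eLpNorm (fun s => f (ψ s)) r ν :=
          eLpNorm_mul_le_of_ae_abs_le (hP.mono fun _ hs => hs.2) r
      _ ≤ ENNReal.ofReal C * K * N f := by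
          rw [mul_assoc]
          gcongr
          exact hbound f hf

theorem eLpNorm_comp_eq_eLpNorm_withDensity_rnDeriv [MeasurableSpace T] {μ : Measure T}
    [SigmaFinite μ] [SFinite ν] {ψ : S → T} (hψ : Measurable ψ) (habs : ν.map ψ ≪ μ)
    {f : T → ℝ} (hf : Measurable f) (r : ℝ≥0∞) :
    eLpNorm (fun s => f (ψ s)) r ν = eLpNorm f r (μ.withDensity ((ν.map ψ).rnDeriv μ)) := by
  rw [Measure.withDensity_rnDeriv_eq _ _ habs,
    eLpNorm_map_measure hf.aestronglyMeasurable hψ.aemeasurable]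
  rfl

end Weight

section KotheDual

variable {α : Type*} [MeasurableSpace α] {μ : Measure α} {J : α → ℝ≥0∞}

theorem lintegral_mul_le_essSup_mul_lintegral {h : α → ℝ≥0∞} (hh : Measurable h) :
    ∫⁻ x, J x * h x ∂μ ≤ essSup J μ * ∫⁻ x, h x ∂μ := by
  rw [← lintegral_const_mul _ hh]
  exact lintegral_mono_ae ((ae_le_essSup J).mono fun x hx => by gcongr)

theorem essSup_le_of_forall_lintegral_mul_le [SigmaFinite μ] (hJ : Measurable J) {L : ℝ≥0∞}
    (hL : ∀ h : α → ℝ≥0∞, Measurable h → (∀ x, h x ≠ ⊤) →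
      ∫⁻ x, J x * h x ∂μ ≤ L * ∫⁻ x, h x ∂μ) :
    essSup J μ ≤ L := by
  refine essSup_le_of_ae_le _ (ae_le_of_forall_setLIntegral_le_of_sigmaFinite hJ fun s hs _ => ?_)
  have := hL (s.indicator 1) (measurable_const.indicator hs) fun x => by
    by_cases hx : x ∈ s <;> simp [hx]
  have hJs : ∫⁻ x, J x * s.indicator 1 x ∂μ = ∫⁻ x in s, J x ∂μ := by
    rw [← lintegral_indicator hs]
    congr with x
    by_cases hx : x ∈ s <;> simp [hx]
  rw [setLIntegral_const, ← hJs]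
  rwa [lintegral_indicator_one hs] at this

theorem lintegral_rpow_le_of_forall_lintegral_mul_le_of_le {s r : ℝ} (hsr : s.HolderConjugate r)
    {L : ℝ≥0∞} (hL : ∀ h : α → ℝ≥0∞, Measurable h → (∀ x, h x ≠ ⊤) →
      ∫⁻ x, J x * h x ∂μ ≤ L * (∫⁻ x, h x ^ s ∂μ) ^ (1 / s))
    {g : α → ℝ≥0∞} (hg : Measurable g) (hgJ : g ≤ J) (hg_top : ∀ x, g x ≠ ⊤)
    (hg_int : ∫⁻ x, g x ^ r ∂μ ≠ ⊤) :
    ∫⁻ x, g x ^ r ∂μ ≤ L ^ r := by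
  set M := ∫⁻ x, g x ^ r ∂μ
  have hr := hsr.symm
  have hpow : ∀ x, g x ^ r ≤ J x * g x ^ (r - 1) := fun x => by
    rcases eq_or_ne (g x) 0 with h0 | h0
    · simp [h0, zero_rpow_of_pos hr.pos]
    · calc g x ^ r = g x ^ (1 + (r - 1)) := by rw [add_sub_cancel]
        _ = g x * g x ^ (r - 1) := by rw [rpow_add _ _ h0 (hg_top x), rpow_one]
        _ ≤ J x * g x ^ (r - 1) := by gcongr; exact hgJ x
  -- testing against `g ^ (r - 1)`, whose `s`-th power is `g ^ r`
  have hM : M ≤ L * M ^ (1 / s) := calc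
    M ≤ ∫⁻ x, J x * g x ^ (r - 1) ∂μ := lintegral_mono hpow
    _ ≤ L * (∫⁻ x, (g x ^ (r - 1)) ^ s ∂μ) ^ (1 / s) :=
        hL _ (hg.pow_const _) fun x => rpow_ne_top_of_nonneg hr.sub_one_pos.le (hg_top x)
    _ = L * M ^ (1 / s) := by simp_rw [← rpow_mul, hr.sub_one_mul_conj]; rfl
  rcases eq_or_ne M 0 with h0 | h0
  · simp [h0]
  have hMr : M ^ (1 / r) ≤ L := by
    have hsplit : M = M ^ (1 / r) * M ^ (1 / s) := by
      rw [← rpow_add _ _ h0 hg_int, one_div, one_div, hr.inv_add_inv_eq_one, rpow_one]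
    exact (ENNReal.mul_le_mul_iff_left (rpow_pos (pos_iff_ne_zero.2 h0) hg_int).ne'
      (rpow_ne_top_of_nonneg (one_div_nonneg.2 hsr.nonneg) hg_int)).1 (hsplit.symm.trans_le hM)
  calc M = (M ^ (1 / r)) ^ r := by rw [← rpow_mul, one_div_mul_cancel hr.ne_zero, rpow_one]
    _ ≤ L ^ r := rpow_le_rpow hMr hr.nonneg

theorem tendsto_indicator_spanningSets_min [SigmaFinite μ] (f : α → ℝ≥0∞) (x : α) :
    Tendsto (fun n : ℕ => (spanningSets μ n).indicator (fun y => min (f y) n) x) atTop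
      (𝓝 (f x)) := by
  have : Tendsto (fun n : ℕ => min (f x) n) atTop (𝓝 (f x)) := by
    simpa using tendsto_const_nhds.min ENNReal.tendsto_nat_nhds_top
  refine this.congr' ?_
  filter_upwards [eventually_mem_spanningSets μ x] with n hn
  rw [Set.indicator_of_mem hn]

theorem lintegral_rpow_le_of_forall_lintegral_mul_le [SigmaFinite μ] (hJ : Measurable J)
    {s r : ℝ} (hsr : s.HolderConjugate r) {L : ℝ≥0∞}
    (hL : ∀ h : α → ℝ≥0∞, Measurable h → (∀ x, h x ≠ ⊤) →
      ∫⁻ x, J x * h x ∂μ ≤ L * (∫⁻ x, h x ^ s ∂μ) ^ (1 / s)) :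
    ∫⁻ x, J x ^ r ∂μ ≤ L ^ r := by
  set g : ℕ → α → ℝ≥0∞ := fun n => (spanningSets μ n).indicator (fun y => min (J y) n)
  have hg : ∀ n, Measurable (g n) := fun n =>
    (hJ.min measurable_const).indicator (measurableSet_spanningSets μ n)
  have hg_top : ∀ n x, g n x ≠ ⊤ := fun n x => by
    by_cases hx : x ∈ spanningSets μ n <;> simp [g, hx]
  have hg_int : ∀ n, ∫⁻ x, g n x ^ r ∂μ ≠ ⊤ := fun n => by
    have hle : ∀ x, g n x ^ r ≤ (spanningSets μ n).indicator (fun _ => (n : ℝ≥0∞) ^ r) x :=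
      fun x => by
        by_cases hx : x ∈ spanningSets μ n
        · simp only [g, Set.indicator_of_mem hx]
          exact rpow_le_rpow (min_le_right _ _) hsr.symm.nonneg
        · simp [g, hx, zero_rpow_of_pos hsr.symm.pos]
    refine ne_top_of_le_ne_top ?_ (lintegral_mono hle)
    rw [lintegral_indicator_const (measurableSet_spanningSets μ n)]
    exact mul_ne_top (rpow_ne_top_of_nonneg hsr.symm.nonneg (natCast_ne_top n))
      (measure_spanningSets_lt_top μ n).ne
  calc ∫⁻ x, J x ^ r ∂μ = ∫⁻ x, liminf (fun n => g n x ^ r) atTop ∂μ :=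
        lintegral_congr fun x => (((continuous_rpow_const).tendsto _).comp
          (tendsto_indicator_spanningSets_min J x)).liminf_eq.symm
    _ ≤ liminf (fun n => ∫⁻ x, g n x ^ r ∂μ) atTop :=
        lintegral_liminf_le fun n => (hg n).pow_const r
    _ ≤ L ^ r := liminf_le_of_frequently_le' (Frequently.of_forall fun n =>
        lintegral_rpow_le_of_forall_lintegral_mul_le_of_le hsr hL (hg n)
          (Set.indicator_le fun _ _ => min_le_left _ _) (hg_top n) (hg_int n))

theorem exists_lintegral_mul_le_lintegral_iff_essSup_ne_top [SigmaFinite μ] (hJ : Measurable J) :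
    (∃ L : ℝ≥0∞, L ≠ ⊤ ∧ ∀ h : α → ℝ≥0∞, Measurable h → (∀ x, h x ≠ ⊤) →
      ∫⁻ x, J x * h x ∂μ ≤ L * ∫⁻ x, h x ∂μ) ↔ essSup J μ ≠ ⊤ :=
  ⟨fun ⟨_, hL, hbound⟩ => ne_top_of_le_ne_top hL (essSup_le_of_forall_lintegral_mul_le hJ hbound),
    fun hJ_ess => ⟨essSup J μ, hJ_ess, fun _ hh _ => lintegral_mul_le_essSup_mul_lintegral hh⟩⟩

theorem exists_lintegral_mul_le_iff_lintegral_rpow_ne_top [SigmaFinite μ] (hJ : Measurable J)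
    {s r : ℝ} (hsr : s.HolderConjugate r) :
    (∃ L : ℝ≥0∞, L ≠ ⊤ ∧ ∀ h : α → ℝ≥0∞, Measurable h → (∀ x, h x ≠ ⊤) →
      ∫⁻ x, J x * h x ∂μ ≤ L * (∫⁻ x, h x ^ s ∂μ) ^ (1 / s)) ↔ ∫⁻ x, J x ^ r ∂μ ≠ ⊤ := by
  constructor
  · rintro ⟨L, hL, hbound⟩
    exact ne_top_of_le_ne_top (rpow_ne_top_of_nonneg hsr.symm.nonneg hL)
      (lintegral_rpow_le_of_forall_lintegral_mul_le hJ hsr hbound)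
  · refine fun hJr => ⟨(∫⁻ x, J x ^ r ∂μ) ^ (1 / r),
      rpow_ne_top_of_nonneg (one_div_nonneg.2 hsr.symm.nonneg) hJr, fun h hh _ => ?_⟩
    calc ∫⁻ x, J x * h x ∂μ = ∫⁻ x, (h * J) x ∂μ := lintegral_congr fun x => mul_comm _ _
      _ ≤ _ := ENNReal.lintegral_mul_le_Lp_mul_Lq μ hsr hh.aemeasurable hJ.aemeasurable
      _ = _ := mul_comm _ _

end KotheDual

section Embedding

variable {α : Type*} [MeasurableSpace α] {μ : Measure α} {J : α → ℝ≥0∞} {p q : ℝ}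

theorem eLpNorm_ofReal_eq_lintegral (hp : 0 < p) (f : α → ℝ) :
    eLpNorm f (ENNReal.ofReal p) μ = (∫⁻ x, ‖f x‖ₑ ^ p ∂μ) ^ (1 / p) := by
  rw [eLpNorm_eq_lintegral_rpow_enorm_toReal (by simpa using hp) ofReal_ne_top,
    toReal_ofReal hp.le]

theorem eLpNorm_withDensity_le_iff_lintegral_mul_le (hJ : Measurable J) (hq : 0 < q)
    (hp : 0 < p) {f : α → ℝ} (hf : Measurable f) {h : α → ℝ≥0∞} (hfh : ∀ x, ‖f x‖ₑ ^ q = h x)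
    (K : ℝ≥0∞) :
    eLpNorm f (ENNReal.ofReal q) (μ.withDensity J) ≤ K * eLpNorm f (ENNReal.ofReal p) μ ↔
      ∫⁻ x, J x * h x ∂μ ≤ K ^ q * (∫⁻ x, h x ^ (p / q) ∂μ) ^ (q / p) := by
  have hfp : ∀ x, ‖f x‖ₑ ^ p = h x ^ (p / q) := fun x => by
    rw [← hfh, ← rpow_mul, mul_div_cancel₀ _ hq.ne']
  rw [eLpNorm_ofReal_eq_lintegral hq, eLpNorm_ofReal_eq_lintegral hp,
    lintegral_withDensity_eq_lintegral_mul _ hJ (hf.enorm.pow_const q)]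
  simp_rw [Pi.mul_apply, hfh, hfp]
  rw [one_div, rpow_inv_le_iff hq, mul_rpow_of_nonneg _ _ hq.le, ← rpow_mul, one_div_mul_eq_div]

theorem forall_eLpNorm_withDensity_le_iff (hJ : Measurable J) (hq : 0 < q) (hp : 0 < p)
    (K : ℝ≥0∞) :
    (∀ f : α → ℝ, Measurable f →
        eLpNorm f (ENNReal.ofReal q) (μ.withDensity J) ≤ K * eLpNorm f (ENNReal.ofReal p) μ) ↔
      ∀ h : α → ℝ≥0∞, Measurable h → (∀ x, h x ≠ ⊤) →
        ∫⁻ x, J x * h x ∂μ ≤ K ^ q * (∫⁻ x, h x ^ (p / q) ∂μ) ^ (q / p) := by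
  constructor
  · intro hbound h hh hh_top
    have hfh : ∀ x, ‖(h x ^ q⁻¹).toReal‖ₑ ^ q = h x := fun x => by
      rw [Real.enorm_of_nonneg toReal_nonneg, ofReal_toReal
        (rpow_ne_top_of_nonneg (inv_nonneg.2 hq.le) (hh_top x)), ← rpow_mul,
        inv_mul_cancel₀ hq.ne', rpow_one]
    have hf : Measurable fun x => (h x ^ q⁻¹).toReal := (hh.pow_const _).ennreal_toReal
    exact (eLpNorm_withDensity_le_iff_lintegral_mul_le hJ hq hp hf hfh K).1 (hbound _ hf)
  · intro hbound f hf
    exact (eLpNorm_withDensity_le_iff_lintegral_mul_le hJ hq hp hf (fun _ => rfl) K).2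
      (hbound _ (hf.enorm.pow_const q) fun _ => rpow_ne_top_of_nonneg hq.le enorm_ne_top)

theorem ENNReal.exists_ne_top_rpow_iff (hq : 0 < q) (P : ℝ≥0∞ → Prop) :
    (∃ K : ℝ≥0∞, K ≠ ⊤ ∧ P (K ^ q)) ↔ ∃ L : ℝ≥0∞, L ≠ ⊤ ∧ P L :=
  ⟨fun ⟨K, hK, hP⟩ => ⟨K ^ q, rpow_ne_top_of_nonneg hq.le hK, hP⟩,
    fun ⟨L, hL, hP⟩ => ⟨L ^ q⁻¹, rpow_ne_top_of_nonneg (inv_nonneg.2 hq.le) hL, by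
      rwa [← rpow_mul, inv_mul_cancel₀ hq.ne', rpow_one]⟩⟩

theorem exists_eLpNorm_withDensity_le_iff_memLkappa [SigmaFinite μ] (hJ : Measurable J)
    (hq : 0 < q) (hqp : q ≤ p) :
    (∃ K : ℝ≥0∞, K ≠ ⊤ ∧ ∀ f : α → ℝ, Measurable f →
        eLpNorm f (ENNReal.ofReal q) (μ.withDensity J) ≤ K * eLpNorm f (ENNReal.ofReal p) μ) ↔
      memLkappa μ p q (fun x => J x ^ (1 / q)) := by
  simp_rw [forall_eLpNorm_withDensity_le_iff hJ hq (hq.trans_le hqp)]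
  rw [ENNReal.exists_ne_top_rpow_iff hq (fun L => ∀ h : α → ℝ≥0∞, Measurable h →
    (∀ x, h x ≠ ⊤) → ∫⁻ x, J x * h x ∂μ ≤ L * (∫⁻ x, h x ^ (p / q) ∂μ) ^ (q / p))]
  rcases hqp.eq_or_lt with rfl | hqp
  · have hess : essSup (fun x => J x ^ (1 / q)) μ = essSup J μ ^ (1 / q) :=
      ((orderIsoRpow (1 / q) (one_div_pos.2 hq)).essSup_apply J μ).symm
    rw [memLkappa, if_pos rfl, hess, Ne, rpow_eq_top_iff_of_pos (one_div_pos.2 hq)]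
    simpa [div_self hq.ne'] using exists_lintegral_mul_le_lintegral_iff_essSup_ne_top (μ := μ) hJ
  · have hsr : (p / q).HolderConjugate (p / (p - q)) := by
      rw [Real.holderConjugate_iff_eq_conjExponent ((one_lt_div hq).2 hqp)]
      field_simp
    have hκ : ∀ x, (J x ^ (1 / q)) ^ (p * q / (p - q)) = J x ^ (p / (p - q)) := fun x => by
      rw [← rpow_mul]
      field_simp
    rw [memLkappa, if_neg hqp.ne', lintegral_congr fun x => hκ x, ← one_div_div p q]
    exact exists_lintegral_mul_le_iff_lintegral_rpow_ne_top hJ hsr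

end Embedding

theorem weighted_composition_bounded_iff_rnDeriv_memLkappa_general
    {T S : Type*} [MeasurableSpace T] [MeasurableSpace S]
    (μ : Measure T) (ν : Measure S) [SigmaFinite μ] [SigmaFinite ν]
    (p q : ℝ) (hq : 1 ≤ q) (hpq : q ≤ p)
    (ψ : S → T) (hψ : Measurable ψ)
    (habs : Measure.map ψ ν ≪ μ)
    (J : T → ℝ≥0∞) (hJ : J = (Measure.map ψ ν).rnDeriv μ)
    (P : S → ℝ)
    (c C : ℝ) (hc : 0 < c)
    (hPbdd : ∀ᵐ s ∂ν, c ≤ |P s| ∧ |P s| ≤ C) :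
    (∃ K : ℝ≥0∞, K ≠ ⊤ ∧ ∀ f : T → ℝ, Measurable f →
        eLpNorm (fun s => P s * f (ψ s)) (ENNReal.ofReal q) ν ≤
          K * eLpNorm f (ENNReal.ofReal p) μ)
      ↔ memLkappa μ p q (fun t => J t ^ (1 / q)) := by
  rw [exists_eLpNorm_mul_comp_le_iff hc hPbdd]
  subst hJ
  rw [← exists_eLpNorm_withDensity_le_iff_memLkappa (Measure.measurable_rnDeriv _ _)
    (zero_lt_one.trans_le hq) hpq]
  refine exists_congr fun K => and_congr_right fun _ => forall_congr' fun f =>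
    forall_congr' fun hf => ?_
  rw [eLpNorm_comp_eq_eLpNorm_withDensity_rnDeriv hψ habs hf]

/-- A weighted composition operator `f ↦ P·(f∘ψ)` with weight bounded above and below
(`0 < c ≤ |P| ≤ C < ∞` a.e.) is bounded from `L^p(T,μ)` to `L^q(S,ν)` if and only if
`J^{1/q} ∈ L^κ(T,μ)`, where `J = d(ν∘ψ⁻¹)/dμ`, `κ = pq/(p-q)` for `p > q`, `κ = ∞` for
`p = q`. -/
theorem weighted_composition_bounded_iff_rnDeriv_memLkappa
    {T S : Type*} [MeasurableSpace T] [MeasurableSpace S]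
    (μ : Measure T) (ν : Measure S) [SigmaFinite μ] [SigmaFinite ν]
    (p q : ℝ) (hq : 1 ≤ q) (hpq : q ≤ p)
    (ψ : S → T) (hψ : Measurable ψ)
    (habs : Measure.map ψ ν ≪ μ)
    (J : T → ℝ≥0∞) (hJ : J = (Measure.map ψ ν).rnDeriv μ)
    (P : S → ℝ) (hP : Measurable P)
    (c C : ℝ) (hc : 0 < c) (hcC : c ≤ C)
    (hPbdd : ∀ᵐ s ∂ν, c ≤ |P s| ∧ |P s| ≤ C) :
    (∃ K : ℝ≥0∞, K ≠ ⊤ ∧ ∀ f : T → ℝ, Measurable f →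
        eLpNorm (fun s => P s * f (ψ s)) (ENNReal.ofReal q) ν ≤
          K * eLpNorm f (ENNReal.ofReal p) μ)
      ↔ memLkappa μ p q (fun t => J t ^ (1 / q)) :=
  weighted_composition_bounded_iff_rnDeriv_memLkappa_general μ ν p q hq hpq ψ hψ habs J hJ P c C hc
    hPbdd
end

section
/- Let (T, μ), (S, ν) be σ-finite measure spaces, 1 ≤ q ≤ p < ∞, and let λ be a measure on a measurable set F ⊆ S × T that is absolutely continuous with respect to the product measure ν × μ, with density J(s,t). Let P : F → ℝ be measurable. If the function t ↦ ( ∫_{F_t} |P(s,t)|^q J(s,t) dν(s) )^{1/q} belongs to L^κ(T, μ) (κ = pq/(p−q) for p > q, κ = ∞ for p = q), where F_t = {s : (s,t) ∈ F}, then the operator M_F[f](s,t) = P(s,t) f(t) is bounded from L^p(T, μ) to L^q(F, λ), with ‖M_F f‖_{L^q(F,λ)} ≤ ‖ (∫_{F_t} |P|^q J dν)^{1/q} ‖_{L^κ(T)} ‖f‖_{L^p(T)}. -/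
open MeasureTheory ENNReal

/-- The `L^κ` norm (`κ = pq/(p-q)` for `p > q`, essential supremum for `p = q`) of an
`ℝ≥0∞`-valued function. -/
noncomputable def lKappaNorm {T : Type*} [MeasurableSpace T] (μ : Measure T)
    (p q : ℝ) (g : T → ℝ≥0∞) : ℝ≥0∞ :=
  if p = q then essSup g μ
  else (∫⁻ t, g t ^ (p * q / (p - q)) ∂μ) ^ ((p - q) / (p * q))

/-!
Writing `g t = (∫_{F_t} |P|^q J dν)^{1/q}`, Tonelli on `F ⊆ S × T` factors `|f t|^q` out of the
inner integral, so `‖M_F f‖_{L^q(λ)} = ‖g · |f|‖_{L^q(μ)}`. Since `1/q = 1/κ + 1/p`, Hölder's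
inequality bounds this by `‖g‖_{L^κ} ‖f‖_{L^p}`; for `p = q` it is the trivial bound by `ess sup g`.
-/

section Slices

variable {S T : Type*} [MeasurableSpace S] [MeasurableSpace T] {ν : Measure S} {μ : Measure T}
  {F : Set (S × T)}

theorem lintegral_indicator_prodMk_right (hF : MeasurableSet F) (φ : S × T → ℝ≥0∞) (t : T) :
    ∫⁻ s, F.indicator φ (s, t) ∂ν = ∫⁻ s in {s | (s, t) ∈ F}, φ (s, t) ∂ν := by
  rw [← lintegral_indicator (show MeasurableSet {s | (s, t) ∈ F} from
    hF.preimage measurable_prodMk_right)]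
  exact lintegral_congr fun s => (Set.indicator_comp_right (fun s => (s, t))).symm

theorem measurable_setLIntegral_slice [SFinite ν] (hF : MeasurableSet F) {φ : S × T → ℝ≥0∞}
    (hφ : Measurable φ) : Measurable fun t => ∫⁻ s in {s | (s, t) ∈ F}, φ (s, t) ∂ν := by
  simpa only [lintegral_indicator_prodMk_right hF] using (hφ.indicator hF).lintegral_prod_left'

theorem lintegral_restrict_withDensity_prod [SFinite ν] [SFinite μ] (hF : MeasurableSet F)
    {J φ : S × T → ℝ≥0∞} (hJ : Measurable J) (hφ : Measurable φ) :
    ∫⁻ x, φ x ∂((ν.prod μ).withDensity J).restrict F =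
      ∫⁻ t, ∫⁻ s in {s | (s, t) ∈ F}, J (s, t) * φ (s, t) ∂ν ∂μ := by
  rw [restrict_withDensity hF, lintegral_withDensity_eq_lintegral_mul _ hJ hφ,
    ← lintegral_indicator hF, lintegral_prod_symm _ ((hJ.mul hφ).indicator hF).aemeasurable]
  simp only [lintegral_indicator_prodMk_right hF, Pi.mul_apply]

end Slices

section Holder

variable {T : Type*} [MeasurableSpace T] {μ : Measure T} {g c : T → ℝ≥0∞}

theorem lintegral_mul_rpow_le_essSup_mul {p : ℝ} (hp : 0 < p) (hc : AEMeasurable c μ) :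
    (∫⁻ t, (g t * c t) ^ p ∂μ) ^ (1 / p) ≤ essSup g μ * (∫⁻ t, c t ^ p ∂μ) ^ (1 / p) := by
  calc (∫⁻ t, (g t * c t) ^ p ∂μ) ^ (1 / p)
      ≤ (essSup g μ ^ p * ∫⁻ t, c t ^ p ∂μ) ^ (1 / p) := by
        rw [← lintegral_const_mul'' _ (hc.pow_const p)]
        gcongr ?_ ^ _
        refine lintegral_mono_ae ?_
        filter_upwards [ae_le_essSup g] with t ht
        rw [ENNReal.mul_rpow_of_nonneg _ _ hp.le]
        gcongr
    _ = essSup g μ * (∫⁻ t, c t ^ p ∂μ) ^ (1 / p) := by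
        rw [ENNReal.mul_rpow_of_nonneg _ _ (by positivity), ← ENNReal.rpow_mul,
          mul_one_div_cancel hp.ne', ENNReal.rpow_one]

theorem lintegral_mul_rpow_le_lKappaNorm_mul {p q : ℝ} (hq : 0 < q) (hqp : q ≤ p)
    (hg : AEMeasurable g μ) (hc : AEMeasurable c μ) :
    (∫⁻ t, (g t * c t) ^ q ∂μ) ^ (1 / q) ≤ lKappaNorm μ p q g * (∫⁻ t, c t ^ p ∂μ) ^ (1 / p) := by
  rw [lKappaNorm]
  split_ifs with hpq
  · subst hpq
    exact lintegral_mul_rpow_le_essSup_mul hq hc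
  have hqp' : 0 < p - q := sub_pos.mpr (lt_of_le_of_ne hqp (Ne.symm hpq))
  have hp : 0 < p := hq.trans_le hqp
  have hκ : 1 / (p * q / (p - q)) = (p - q) / (p * q) := one_div_div _ _
  rw [← hκ]
  refine ENNReal.lintegral_Lp_mul_le_Lq_mul_Lr hq ?_ ?_ μ hg hc
  · rw [lt_div_iff₀ hqp']
    nlinarith
  · rw [hκ]
    field_simp
    ring

end Holder

theorem eLpNorm_mul_snd_restrict_withDensity_prod {S T : Type*} [MeasurableSpace S]
    [MeasurableSpace T] {ν : Measure S} {μ : Measure T} [SFinite ν] [SFinite μ]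
    {F : Set (S × T)} (hF : MeasurableSet F) {J : S × T → ℝ≥0∞} (hJ : Measurable J)
    {P : S × T → ℝ} (hP : Measurable P) {f : T → ℝ} (hf : Measurable f) {q : ℝ} (hq : 0 < q) :
    eLpNorm (fun x : S × T => P x * f x.2) (ENNReal.ofReal q)
        (((ν.prod μ).withDensity J).restrict F) =
      (∫⁻ t, ((∫⁻ s in {s | (s, t) ∈ F}, ENNReal.ofReal |P (s, t)| ^ q * J (s, t) ∂ν) ^ (1 / q) *
        ‖f t‖ₑ) ^ q ∂μ) ^ (1 / q) := by
  rw [eLpNorm_eq_lintegral_rpow_enorm_toReal (by simpa using hq) ofReal_ne_top,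
    toReal_ofReal hq.le,
    lintegral_restrict_withDensity_prod hF hJ (by fun_prop)]
  congr 1
  refine lintegral_congr fun t => ?_
  have hfactor : ∀ s, J (s, t) * ‖P (s, t) * f t‖ₑ ^ q =
      ‖f t‖ₑ ^ q * (ENNReal.ofReal |P (s, t)| ^ q * J (s, t)) := fun s => by
    rw [enorm_mul, ENNReal.mul_rpow_of_nonneg _ _ hq.le, Real.enorm_eq_ofReal_abs (P _)]
    ring
  simp only [hfactor]
  rw [lintegral_const_mul' _ _ (rpow_ne_top_of_nonneg hq.le enorm_ne_top),
    ENNReal.mul_rpow_of_nonneg _ _ hq.le, ← ENNReal.rpow_mul, one_div_mul_cancel hq.ne',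
    ENNReal.rpow_one, mul_comm]

theorem mixed_operator_bounded_of_memLkappa_general
    {T S : Type*} [MeasurableSpace T] [MeasurableSpace S]
    (μ : Measure T) (ν : Measure S) [SigmaFinite μ] [SigmaFinite ν]
    (p q : ℝ) (hq : 1 ≤ q) (hqp : q ≤ p)
    (F : Set (S × T)) (hF : MeasurableSet F)
    (J : S × T → ℝ≥0∞) (hJ : Measurable J)
    (lam : Measure (S × T))
    (hlam : lam = ((ν.prod μ).withDensity J).restrict F)
    (P : S × T → ℝ) (hP : Measurable P) :
    ∀ f : T → ℝ, Measurable f →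
      eLpNorm (fun x : S × T => P x * f x.2) (ENNReal.ofReal q) lam ≤
        lKappaNorm μ p q
          (fun t => (∫⁻ s in {s | (s, t) ∈ F},
            ENNReal.ofReal |P (s, t)| ^ q * J (s, t) ∂ν) ^ (1 / q)) *
          eLpNorm f (ENNReal.ofReal p) μ := by
  intro f hf
  have hq₀ : 0 < q := one_pos.trans_le hq
  have hp₀ : 0 < p := hq₀.trans_le hqp
  have hg : Measurable fun t => (∫⁻ s in {s | (s, t) ∈ F},
      ENNReal.ofReal |P (s, t)| ^ q * J (s, t) ∂ν) ^ (1 / q) :=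
    (measurable_setLIntegral_slice hF
      ((hP.abs.ennreal_ofReal.pow_const q).mul hJ)).pow_const _
  rw [hlam, eLpNorm_mul_snd_restrict_withDensity_prod hF hJ hP hf hq₀,
    eLpNorm_eq_lintegral_rpow_enorm_toReal (by simpa using hp₀) ofReal_ne_top,
    toReal_ofReal hp₀.le]
  exact lintegral_mul_rpow_le_lKappaNorm_mul hq₀ hqp hg.aemeasurable hf.enorm.aemeasurable

/-- Sufficiency for the mixed operator `M_F[f](s,t) = P(s,t) f(t)`: if
`t ↦ (∫_{F_t} |P(s,t)|^q J(s,t) dν(s))^{1/q} ∈ L^κ(T,μ)`, where `λ ≪ ν × μ` with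
density `J`, then `M_F` is bounded from `L^p(T,μ)` to `L^q(F,λ)` with norm at most
`‖(∫_{F_t} |P|^q J dν)^{1/q}‖_{L^κ(T)}`. -/
theorem mixed_operator_bounded_of_memLkappa
    {T S : Type*} [MeasurableSpace T] [MeasurableSpace S]
    (μ : Measure T) (ν : Measure S) [SigmaFinite μ] [SigmaFinite ν]
    (p q : ℝ) (hq : 1 ≤ q) (hqp : q ≤ p)
    (F : Set (S × T)) (hF : MeasurableSet F)
    (J : S × T → ℝ≥0∞) (hJ : Measurable J)
    (lam : Measure (S × T))
    (hlam : lam = ((ν.prod μ).withDensity J).restrict F)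
    (P : S × T → ℝ) (hP : Measurable P)
    (hfin : lKappaNorm μ p q
        (fun t => (∫⁻ s in {s | (s, t) ∈ F},
          ENNReal.ofReal |P (s, t)| ^ q * J (s, t) ∂ν) ^ (1 / q)) ≠ ⊤) :
    ∀ f : T → ℝ, Measurable f →
      eLpNorm (fun x : S × T => P x * f x.2) (ENNReal.ofReal q) lam ≤
        lKappaNorm μ p q
          (fun t => (∫⁻ s in {s | (s, t) ∈ F},
            ENNReal.ofReal |P (s, t)| ^ q * J (s, t) ∂ν) ^ (1 / q)) *
          eLpNorm f (ENNReal.ofReal p) μ :=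
  mixed_operator_bounded_of_memLkappa_general μ ν p q hq hqp F hF J hJ lam hlam P hP
end
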